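/- arXiv:1801.02159 — 3 statements merged into one kernel-verified Lean document; each statement's English description precedes it below -/
import Mathlib

section
/- The transition-map cocycle identity (transitivity): let A be a k × m matrix over a commutative ring such that M_J(A) and M_K(A) are invertible. Set B = (M_J(A))^{-1} A. Then M_K(B) is invertible and (M_K(B))^{-1} B = (M_K(A))^{-1} A; hence g_{J,K} ∘ g_{I,J} = g_{I,K} on triple chart overlaps. -/
lemma mul_submatrix_id {R : Type*} [CommRing R] {k m : ℕ}
    (P : Matrix (Fin k) (Fin k) R) (A : Matrix (Fin k) (Fin m) R) (f : Fin k → Fin m) :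
    (P * A).submatrix id f = P * A.submatrix id f := by
  ext i j
  simp [Matrix.mul_apply, Matrix.submatrix_apply]

/-- Cocycle transitivity: if `M_J(A)` and `M_K(A)` are invertible and
`B = (M_J(A))⁻¹ A`, then `M_K(B)` is invertible and
`(M_K(B))⁻¹ B = (M_K(A))⁻¹ A`, i.e. `g_{J,K} ∘ g_{I,J} = g_{I,K}`. -/
theorem grassmann_cocycle_trans {R : Type*} [CommRing R] {k m : ℕ}
    (A : Matrix (Fin k) (Fin m) R)
    (fJ fK : Fin k → Fin m)
    (hfJ : Function.Injective fJ) (hfK : Function.Injective fK)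
    (hMJ : IsUnit (A.submatrix id fJ))
    (hMK : IsUnit (A.submatrix id fK)) :
    IsUnit (((A.submatrix id fJ)⁻¹ * A).submatrix id fK) ∧
    ((((A.submatrix id fJ)⁻¹ * A).submatrix id fK)⁻¹ * ((A.submatrix id fJ)⁻¹ * A)) =
      (A.submatrix id fK)⁻¹ * A := by
  have hMJdet : IsUnit (A.submatrix id fJ).det := (Matrix.isUnit_iff_isUnit_det _).mp hMJ
  have hMKdet : IsUnit (A.submatrix id fK).det := (Matrix.isUnit_iff_isUnit_det _).mp hMK
  have hsub : ((A.submatrix id fJ)⁻¹ * A).submatrix id fK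
      = (A.submatrix id fJ)⁻¹ * A.submatrix id fK := mul_submatrix_id _ _ _
  have hinvJ : IsUnit (A.submatrix id fJ)⁻¹ := Matrix.isUnit_nonsing_inv_iff.mpr hMJ
  have hUnit : IsUnit (((A.submatrix id fJ)⁻¹ * A).submatrix id fK) := by
    rw [hsub]; exact hinvJ.mul hMK
  refine ⟨hUnit, ?_⟩
  rw [hsub, Matrix.mul_inv_rev, Matrix.nonsing_inv_nonsing_inv _ hMJdet, Matrix.mul_assoc,
    ← Matrix.mul_assoc (A.submatrix id fJ), Matrix.mul_nonsing_inv _ hMJdet,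
    Matrix.one_mul]
end

section
/- Equivariance of the GL-action with the chart transitions: let X be a k × m matrix and P an invertible m × m matrix over a commutative ring, and suppose M_J(XP), M_H(XP), and M_K(X) are invertible. Then (M_H((M_J(XP))^{-1} X P))^{-1} (M_J(XP))^{-1} X P = (M_H(XP))^{-1} X P, and likewise (M_H((M_K(X))^{-1} X P))^{-1} (M_K(X))^{-1} X P = (M_H(XP))^{-1} X P; consequently the locally defined actions A_{I}^{J} glue, i.e., g_{H,J} ∘ A_I^J = A_K^H ∘ g_{K,I}. -/
private lemma aux_glue {R : Type*} [CommRing R] {k m : ℕ}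
    (Q : Matrix (Fin k) (Fin k) R) (Y : Matrix (Fin k) (Fin m) R)
    (fH : Fin k → Fin m) (hQ : IsUnit Q) :
    ((Q * Y).submatrix id fH)⁻¹ * (Q * Y) = (Y.submatrix id fH)⁻¹ * Y := by
  have hsub : (Q * Y).submatrix id fH = Q * Y.submatrix id fH := by
    ext i j; simp [Matrix.mul_apply, Matrix.submatrix_apply]
  rw [hsub, Matrix.mul_inv_rev, Matrix.mul_assoc, ← Matrix.mul_assoc Q⁻¹,
    Matrix.nonsing_inv_mul Q ((Matrix.isUnit_iff_isUnit_det Q).mp hQ),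
    Matrix.one_mul]

/-- Equivariance of the `GL`-action with chart transitions: for a `k × m` matrix
`X` and invertible `m × m` matrix `P`, with the minors `M_J(XP)`, `M_H(XP)`,
`M_K(X)` invertible, the two ways of composing the local action with transition
maps agree, i.e. `g_{H,J} ∘ A_I^J = A_K^H ∘ g_{K,I}`. -/
theorem grassmann_action_glues {R : Type*} [CommRing R] {k m : ℕ}
    (X : Matrix (Fin k) (Fin m) R) (P : Matrix (Fin m) (Fin m) R)
    (hP : IsUnit P)
    (fJ fH fK : Fin k → Fin m)
    (hfJ : Function.Injective fJ) (hfH : Function.Injective fH)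
    (hfK : Function.Injective fK)
    (hMJ : IsUnit ((X * P).submatrix id fJ))
    (hMH : IsUnit ((X * P).submatrix id fH))
    (hMK : IsUnit (X.submatrix id fK)) :
    (((((X * P).submatrix id fJ)⁻¹ * X * P).submatrix id fH)⁻¹ *
        (((X * P).submatrix id fJ)⁻¹ * X * P) =
      ((X * P).submatrix id fH)⁻¹ * X * P) ∧
    ((((X.submatrix id fK)⁻¹ * X * P).submatrix id fH)⁻¹ *
        ((X.submatrix id fK)⁻¹ * X * P) =
      ((X * P).submatrix id fH)⁻¹ * X * P) := by
  constructor
  · have := aux_glue (((X * P).submatrix id fJ)⁻¹) (X * P) fH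
      (Matrix.isUnit_nonsing_inv_iff.mpr hMJ)
    simpa [Matrix.mul_assoc] using this
  · have := aux_glue ((X.submatrix id fK)⁻¹) (X * P) fH
      (Matrix.isUnit_nonsing_inv_iff.mpr hMK)
    simpa [Matrix.mul_assoc] using this
end

section
/- Block-diagonal assembly of the transitive action: let X₁, A be k × m real matrices of rank k and X₂, D be l × n real matrices of rank l, and let B be k × n and C be l × m arbitrary real matrices. Then there exist P ∈ GL(m, ℝ), Q ∈ GL(n, ℝ), and matrices H (m × n), N (n × m) such that the block matrix V = [[P, H], [N, Q]] satisfies [[X₁, 0], [0, X₂]] · V = [[A, B], [C, D]]. -/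
/-!
Two surjections `f g : V → W` from a finite-dimensional space differ by an automorphism of `V`:
with `s` a section of `f`, `π` a projection onto `ker g` and `i : ker g ≃ ker f` (the kernels have
the same dimension by rank–nullity), `e = s ∘ g + i ∘ π` satisfies `f ∘ e = g`, and it is injective
because `range s ∩ ker f = 0`. Applied to `X₁, A` and to `X₂, D` this gives `P` and `Q`; the
off-diagonal blocks are `H = R₁ B` and `N = R₂ C` for right inverses `R₁, R₂` of `X₁, X₂`.
-/

open Function

namespace LinearMap

variable {K V W : Type*} [Field K] [AddCommGroup V] [Module K V] [AddCommGroup W] [Module K W]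
  [FiniteDimensional K V]

theorem finrank_ker_eq_of_surjective {f g : V →ₗ[K] W} (hf : Surjective f) (hg : Surjective g) :
    Module.finrank K (ker g) = Module.finrank K (ker f) := by
  have hf' := f.finrank_range_add_finrank_ker
  have hg' := g.finrank_range_add_finrank_ker
  rw [range_eq_top.2 hf] at hf'
  rw [range_eq_top.2 hg] at hg'
  omega

theorem exists_linearEquiv_comp_eq_of_surjective {f g : V →ₗ[K] W} (hf : Surjective f)
    (hg : Surjective g) : ∃ e : V ≃ₗ[K] V, f ∘ₗ e = g := by
  obtain ⟨s, hs⟩ := f.exists_rightInverse_of_surjective (range_eq_top.2 hf)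
  obtain ⟨t, ht⟩ := g.exists_rightInverse_of_surjective (range_eq_top.2 hg)
  have hst : ∀ w, f (s w) = w := fun w => congr($hs w)
  have htg : ∀ w, g (t w) = w := fun w => congr($ht w)
  let i : ker g ≃ₗ[K] ker f := .ofFinrankEq _ _ (finrank_ker_eq_of_surjective hf hg)
  let π : V →ₗ[K] ker g := codRestrict _ (id - t ∘ₗ g) fun v => by simp [htg]
  let e : V →ₗ[K] V := s ∘ₗ g + (ker f).subtype ∘ₗ i ∘ₗ π
  have hfe : f ∘ₗ e = g := by
    ext v
    simp [e, hst]
  have he : Injective e := by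
    rw [← ker_eq_bot, ker_eq_bot']
    intro v hv
    have hgv : g v = 0 := by rw [← hfe, comp_apply, hv, map_zero]
    have : i (π v) = 0 := by
      ext
      simpa [e, hgv] using hv
    simpa [π, hgv] using congr(((↑) : ker g → V) $(i.map_eq_zero_iff.1 this))
  exact ⟨.ofInjectiveEndo e he, hfe⟩

end LinearMap

namespace Matrix

variable {K m n : Type*} [Field K] [Fintype m] [Fintype n]

theorem mulVecLin_surjective_of_rank_eq {X : Matrix m n K} (hX : X.rank = Fintype.card m) :
    Surjective X.mulVecLin := by
  rw [← LinearMap.range_eq_top]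
  apply Submodule.eq_top_of_finrank_eq
  rw [← Matrix.rank, hX, Module.finrank_fintype_fun_eq_card]

theorem exists_mul_eq_one_of_rank_eq [DecidableEq m] [DecidableEq n] {X : Matrix m n K}
    (hX : X.rank = Fintype.card m) : ∃ R : Matrix n m K, X * R = 1 := by
  obtain ⟨s, hs⟩ :=
    X.mulVecLin.exists_rightInverse_of_surjective
      (LinearMap.range_eq_top.2 (mulVecLin_surjective_of_rank_eq hX))
  refine ⟨LinearMap.toMatrix' s, toLin'.injective ?_⟩
  rw [toLin'_mul, toLin'_toMatrix', toLin'_one]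
  exact hs

theorem exists_isUnit_mul_eq_of_rank_eq [DecidableEq n] {X A : Matrix m n K}
    (hX : X.rank = Fintype.card m) (hA : A.rank = Fintype.card m) :
    ∃ P : Matrix n n K, IsUnit P ∧ X * P = A := by
  obtain ⟨e, he⟩ := LinearMap.exists_linearEquiv_comp_eq_of_surjective
    (mulVecLin_surjective_of_rank_eq hX) (mulVecLin_surjective_of_rank_eq hA)
  have he_unit : IsUnit (e : (n → K) →ₗ[K] n → K) := (Module.End.isUnit_iff _).2 e.bijective
  refine ⟨LinearMap.toMatrix' e, LinearMap.isUnit_toMatrix'_iff.2 he_unit, toLin'.injective ?_⟩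
  rw [toLin'_mul, toLin'_toMatrix']
  exact he

end Matrix

open Matrix in
/-- Block-diagonal assembly of the transitive action: given full-row-rank real
matrices `X₁, A` (`k × m`, rank `k`) and `X₂, D` (`l × n`, rank `l`) and
arbitrary `B` (`k × n`), `C` (`l × m`), there exist `P ∈ GL(m, ℝ)`,
`Q ∈ GL(n, ℝ)`, `H` (`m × n`), `N` (`n × m`) with
`[[X₁,0],[0,X₂]] ⬝ [[P,H],[N,Q]] = [[A,B],[C,D]]`. -/
theorem block_diagonal_assembly {k l m n : ℕ}
    (X₁ A : Matrix (Fin k) (Fin m) ℝ) (hX₁ : X₁.rank = k) (hA : A.rank = k)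
    (X₂ D : Matrix (Fin l) (Fin n) ℝ) (hX₂ : X₂.rank = l) (hD : D.rank = l)
    (B : Matrix (Fin k) (Fin n) ℝ) (C : Matrix (Fin l) (Fin m) ℝ) :
    ∃ (P : Matrix (Fin m) (Fin m) ℝ) (Q : Matrix (Fin n) (Fin n) ℝ)
      (H : Matrix (Fin m) (Fin n) ℝ) (N : Matrix (Fin n) (Fin m) ℝ),
      IsUnit P ∧ IsUnit Q ∧
      Matrix.fromBlocks X₁ 0 0 X₂ * Matrix.fromBlocks P H N Q =
        Matrix.fromBlocks A B C D := by
  replace hX₁ : X₁.rank = Fintype.card (Fin k) := hX₁.trans (Fintype.card_fin k).symm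
  replace hA : A.rank = Fintype.card (Fin k) := hA.trans (Fintype.card_fin k).symm
  replace hX₂ : X₂.rank = Fintype.card (Fin l) := hX₂.trans (Fintype.card_fin l).symm
  replace hD : D.rank = Fintype.card (Fin l) := hD.trans (Fintype.card_fin l).symm
  obtain ⟨P, hPu, hP⟩ := exists_isUnit_mul_eq_of_rank_eq hX₁ hA
  obtain ⟨Q, hQu, hQ⟩ := exists_isUnit_mul_eq_of_rank_eq hX₂ hD
  obtain ⟨R₁, hR₁⟩ := exists_mul_eq_one_of_rank_eq hX₁
  obtain ⟨R₂, hR₂⟩ := exists_mul_eq_one_of_rank_eq hX₂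
  refine ⟨P, Q, R₁ * B, R₂ * C, hPu, hQu, ?_⟩
  simp [fromBlocks_multiply, hP, hQ, ← Matrix.mul_assoc, hR₁, hR₂]
end
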